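/- arXiv:2605.25104 — 4 statements merged into one kernel-verified Lean document; each statement's English description precedes it below -/
import Mathlib

section
/- Let f : ℝ² → ℍ have polar form f(x) = ρ(x)q(x) with ρ(x) = |f(x)| and |q(x)| = 1 for all x, and suppose ρ and q are differentiable in the x_k direction at x, for k ∈ {1,2}. Then |(∂f/∂x_k)(x)|² = ((∂ρ/∂x_k)(x))² + ρ(x)² · |(∂q/∂x_k)(x) q̄(x)|². -/
noncomputable section
open MeasureTheory Real Filter

/-- The real quaternions. -/
abbrev H := Quaternion ℝ

/-- The imaginary unit `i`. -/
def qi : H := ⟨0, 1, 0, 0⟩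
/-- The imaginary unit `j`. -/
def qj : H := ⟨0, 0, 1, 0⟩
/-- `e₁ = i`, `e₂ = j`. -/
def ek (k : Fin 2) : H := if k = 0 then qi else qj

/-- The scalar part of a quaternion. -/
def Sc (p : H) : ℝ := p.re

/-- Embedding of `ℂ` onto the commutative subalgebra `ℝ + ℝi` of `ℍ`. -/
def toQi (z : ℂ) : H := ⟨z.re, z.im, 0, 0⟩
/-- Embedding of `ℂ` onto the commutative subalgebra `ℝ + ℝj` of `ℍ`. -/
def toQj (z : ℂ) : H := ⟨z.re, 0, z.im, 0⟩

/-- `C_α`: a fixed square root of `(1 - I cot α)/(2π)`, as a complex number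
(principal square root). -/
def Cc (α : ℝ) : ℂ := (((1 : ℂ) - Complex.I * Real.cot α) / (2 * Real.pi)) ^ ((1 : ℂ) / 2)

/-- The left kernel `K_{α₁}(x₁,w₁)`, lying in `ℝ + ℝi`. -/
def K1 (α x w : ℝ) : H :=
  toQi (Cc α * Complex.exp (Complex.I * (((x ^ 2 + w ^ 2) / 2) * Real.cot α - x * w / Real.sin α)))

/-- The right kernel `K_{α₂}(x₂,w₂)`, lying in `ℝ + ℝj`. -/
def K2 (α x w : ℝ) : H :=
  toQj (Cc α * Complex.exp (Complex.I * (((x ^ 2 + w ^ 2) / 2) * Real.cot α - x * w / Real.sin α)))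

/-- The two-sided quaternion fractional Fourier transform. -/
def QFrFT (α₁ α₂ : ℝ) (f : ℝ × ℝ → H) (w : ℝ × ℝ) : H :=
  ∫ x : ℝ × ℝ, K1 α₁ x.1 w.1 * f x * K2 α₂ x.2 w.2

/-- `α ∉ πℤ`. -/
def NotPiMultiple (α : ℝ) : Prop := ∀ n : ℤ, α ≠ n * Real.pi

/-- Coordinate direction vectors of `ℝ²`. -/
def dir (k : Fin 2) : ℝ × ℝ := if k = 0 then (1, 0) else (0, 1)
/-- The `k`-th coordinate of a point of `ℝ²`. -/
def coord (k : Fin 2) (x : ℝ × ℝ) : ℝ := if k = 0 then x.1 else x.2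
/-- The point whose `k`-th coordinate is `t` and whose other coordinate is `b`. -/
def pt (k : Fin 2) (t b : ℝ) : ℝ × ℝ := if k = 0 then (t, b) else (b, t)
/-- The coordinate line through `x` in the `k`-th direction. -/
def lineAt (k : Fin 2) (x : ℝ × ℝ) (t : ℝ) : ℝ × ℝ := pt k t (coord (1 - k) x)
/-- Partial derivative `∂g/∂x_k` of a quaternion-valued function. -/
def pd (k : Fin 2) (g : ℝ × ℝ → H) (x : ℝ × ℝ) : H := fderiv ℝ g x (dir k)
/-- Partial derivative `∂g/∂x_k` of a real-valued function. -/
def pdR (k : Fin 2) (g : ℝ × ℝ → ℝ) (x : ℝ × ℝ) : ℝ := fderiv ℝ g x (dir k)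
/-- The angle `α_k`. -/
def angk (α₁ α₂ : ℝ) (k : Fin 2) : ℝ := if k = 0 then α₁ else α₂

/-! Differentiating `f = ρ q` along the line gives `f' q̄ = ρ' + ρ (q' q̄)`. Differentiating
`|q|² = 1` shows that `q' q̄` is purely imaginary, hence orthogonal to the real number `ρ'`,
and Pythagoras together with `|f'| = |f' q̄|` gives the identity. -/

theorem Quaternion.mul_star_eq_one_of_norm_eq_one {a : H} (ha : ‖a‖ = 1) : a * star a = 1 := by
  rw [Quaternion.self_mul_star, Quaternion.normSq_eq_norm_mul_self, ha, one_mul,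
    Quaternion.coe_one]

theorem Quaternion.re_mul_star_eq_zero_of_hasDerivAt {c : ℝ → H} {d : H} {t : ℝ}
    (hc : ∀ s, ‖c s‖ = 1) (hd : HasDerivAt c d t) : (d * star (c t)).re = 0 := by
  have hconst : (fun s => ‖c s‖ ^ 2) = fun _ => (1 : ℝ) := by
    funext s; rw [hc, one_pow]
  have h : 2 * inner ℝ (c t) d = 0 := by
    have := hd.norm_sq
    rw [hconst] at this
    exact this.unique (hasDerivAt_const t 1)
  rw [← Quaternion.re_star, star_mul, star_star, ← Quaternion.inner_def]
  linarith

theorem Quaternion.norm_coe_add_sq_of_re_eq_zero (a : ℝ) {u : H} (hu : u.re = 0) :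
    ‖(a : H) + u‖ ^ 2 = a ^ 2 + ‖u‖ ^ 2 := by
  have horth : inner ℝ (a : H) u = 0 := by
    simp [Quaternion.inner_def, Quaternion.coe_mul_eq_smul, hu]
  rw [norm_add_sq_real, horth, Quaternion.norm_coe, Real.norm_eq_abs, sq_abs]
  ring

theorem lineAt_coord (k : Fin 2) (x : ℝ × ℝ) : lineAt k x (coord k x) = x := by
  fin_cases k <;> simp [lineAt, pt, coord]

theorem stmt1_general (f : ℝ × ℝ → H) (ρ : ℝ × ℝ → ℝ) (q : ℝ × ℝ → H)
    (hq : ∀ x, ‖q x‖ = 1)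
    (hpolar : ∀ x, f x = (ρ x : H) * q x)
    (x : ℝ × ℝ) (k : Fin 2) (dρ : ℝ) (dq df : H)
    (hdρ : HasDerivAt (fun t : ℝ => ρ (lineAt k x t)) dρ (coord k x))
    (hdq : HasDerivAt (fun t : ℝ => q (lineAt k x t)) dq (coord k x))
    (hdf : HasDerivAt (fun t : ℝ => f (lineAt k x t)) df (coord k x)) :
    ‖df‖ ^ 2 = dρ ^ 2 + ρ x ^ 2 * ‖dq * star (q x)‖ ^ 2 := by
  have hdf_eq : df = ρ x • dq + dρ • q x := by
    have hsmul := hdρ.smul hdq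
    rw [lineAt_coord] at hsmul
    have hf : (fun t => f (lineAt k x t)) = (fun t => ρ (lineAt k x t)) • fun t => q (lineAt k x t) :=
      funext fun t => (hpolar _).trans (Quaternion.coe_mul_eq_smul _ _)
    rw [hf] at hdf
    exact hdf.unique hsmul
  have hre : (dq * star (q x)).re = 0 := by
    simpa only [lineAt_coord] using
      Quaternion.re_mul_star_eq_zero_of_hasDerivAt (fun t => hq _) hdq
  calc ‖df‖ ^ 2 = ‖df * star (q x)‖ ^ 2 := by
        rw [norm_mul, Quaternion.norm_star, hq, mul_one]
    _ = ‖(dρ : H) + ρ x • (dq * star (q x))‖ ^ 2 := by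
        rw [hdf_eq, add_mul, smul_mul_assoc, smul_mul_assoc,
          Quaternion.mul_star_eq_one_of_norm_eq_one (hq x), add_comm,
          ← Quaternion.coe_mul_eq_smul dρ, mul_one]
    _ = dρ ^ 2 + ρ x ^ 2 * ‖dq * star (q x)‖ ^ 2 := by
        rw [Quaternion.norm_coe_add_sq_of_re_eq_zero _ (by simp [hre]), norm_smul,
          Real.norm_eq_abs, mul_pow, sq_abs]

/-- `|∂f/∂x_k|² = (∂ρ/∂x_k)² + ρ² |(∂q/∂x_k) q̄|²` for `f = ρ q` in polar form. -/
theorem stmt1 (f : ℝ × ℝ → H) (ρ : ℝ × ℝ → ℝ) (q : ℝ × ℝ → H)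
    (hρ : ∀ x, ρ x = ‖f x‖) (hq : ∀ x, ‖q x‖ = 1)
    (hpolar : ∀ x, f x = (ρ x : H) * q x)
    (x : ℝ × ℝ) (k : Fin 2) (dρ : ℝ) (dq df : H)
    (hdρ : HasDerivAt (fun t : ℝ => ρ (lineAt k x t)) dρ (coord k x))
    (hdq : HasDerivAt (fun t : ℝ => q (lineAt k x t)) dq (coord k x))
    (hdf : HasDerivAt (fun t : ℝ => f (lineAt k x t)) df (coord k x)) :
    ‖df‖ ^ 2 = dρ ^ 2 + ρ x ^ 2 * ‖dq * star (q x)‖ ^ 2 :=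
  stmt1_general f ρ q hq hpolar x k dρ dq df hdρ hdq hdf
end
end

section
/- Let ρ : ℝ² → [0,∞) be differentiable with ∫_{ℝ²} ρ(x)² dx = 1, and suppose for k ∈ {1,2} that x_k ρ ∈ L²(ℝ²), ∂ρ/∂x_k ∈ L²(ℝ²), and x_k ρ(x)² → 0 as x_k → ±∞ for almost every value of the other coordinate. Then for all angles α₁, α₂: (∫_{ℝ²} (x₁² + x₂²) ρ(x)² dx) · (∫_{ℝ²} (sin²α₁ ((∂ρ/∂x₁)(x))² + sin²α₂ ((∂ρ/∂x₂)(x))²) dx) ≥ (1/4)(sin α₁ + sin α₂)². -/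
noncomputable section
open MeasureTheory Real Filter

/-! Along each coordinate line, `(t ρ²)' = ρ² + 2 t ρ ∂ₖρ` and `t ρ²` vanishes at `±∞`, so by Fubini
`∫ xₖ ρ ∂ₖρ = -½ ∫ ρ² = -½`. Cauchy–Schwarz then gives `(∫ xₖ² ρ²)(∫ (∂ₖρ)²) ≥ ¼` for `k = 1, 2`,
and the two one-dimensional uncertainty principles combine into the weighted one by AM–GM on the
cross terms of the product. -/

open Topology

theorem sq_integral_mul_le_integral_sq_mul_integral_sq {α : Type*} [MeasurableSpace α]
    {μ : Measure α} {f g : α → ℝ} (hf : MemLp f 2 μ) (hg : MemLp g 2 μ) :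
    (∫ x, f x * g x ∂μ) ^ 2 ≤ (∫ x, f x ^ 2 ∂μ) * ∫ x, g x ^ 2 ∂μ := by
  have hfg : Integrable (fun x => f x * g x) μ := hf.integrable_mul hg
  have hquad : ∀ t : ℝ, 0 ≤ (∫ x, f x ^ 2 ∂μ) * (t * t) + 2 * (∫ x, f x * g x ∂μ) * t +
      ∫ x, g x ^ 2 ∂μ := by
    intro t
    have hlin : Integrable (fun x => (t * t) * f x ^ 2 + (2 * t) * (f x * g x)) μ :=
      (hf.integrable_sq.const_mul _).add (hfg.const_mul _)
    have hexpand : ∫ x, (t * f x + g x) ^ 2 ∂μ = (∫ x, f x ^ 2 ∂μ) * (t * t) +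
        2 * (∫ x, f x * g x ∂μ) * t + ∫ x, g x ^ 2 ∂μ := by
      rw [show (fun x => (t * f x + g x) ^ 2)
          = fun x => (t * t) * f x ^ 2 + (2 * t) * (f x * g x) + g x ^ 2 by ext x; ring,
        integral_add hlin hg.integrable_sq,
        integral_add (hf.integrable_sq.const_mul _) (hfg.const_mul _), integral_const_mul,
        integral_const_mul]
      ring
    rw [← hexpand]
    exact integral_nonneg fun x => sq_nonneg _
  have hdiscrim := discrim_le_zero hquad
  rw [discrim] at hdiscrim
  nlinarith

theorem integral_mul_mul_deriv_eq_neg_half_integral_sq {u u' : ℝ → ℝ}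
    (hu : ∀ t, HasDerivAt u (u' t) t) (hsq : Integrable fun t => u t ^ 2)
    (hint : Integrable fun t => t * u t * u' t)
    (hdecay : Tendsto (fun t => t * u t ^ 2) (cocompact ℝ) (𝓝 0)) :
    ∫ t, t * u t * u' t = -(1 / 2) * ∫ t, u t ^ 2 := by
  have hderiv : ∀ t, HasDerivAt (fun s => s * u s ^ 2) (u t ^ 2 + 2 * (t * u t * u' t)) t := by
    intro t
    refine ((hasDerivAt_id' t).fun_mul ((hu t).fun_pow 2)).congr_deriv ?_
    push_cast
    ring
  have hzero := integral_of_hasDerivAt_of_tendsto hderiv (hsq.add (hint.const_mul 2))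
    (hdecay.mono_left atBot_le_cocompact) (hdecay.mono_left atTop_le_cocompact)
  rw [integral_add hsq (hint.const_mul 2), integral_const_mul] at hzero
  linarith

section CoordinateLines

theorem coord_pt (k : Fin 2) (t b : ℝ) : coord k (pt k t b) = t := by
  fin_cases k <;> rfl

theorem hasDerivAt_pt (k : Fin 2) (t b : ℝ) : HasDerivAt (fun s => pt k s b) (dir k) t := by
  fin_cases k
  · exact (hasDerivAt_id t).prodMk (hasDerivAt_const t b)
  · exact (hasDerivAt_const t b).prodMk (hasDerivAt_id t)

theorem hasDerivAt_comp_pt {ρ : ℝ × ℝ → ℝ} (hρ : Differentiable ℝ ρ) (k : Fin 2) (t b : ℝ) :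
    HasDerivAt (fun s => ρ (pt k s b)) (pdR k ρ (pt k t b)) t :=
  (hρ _).hasFDerivAt.comp_hasDerivAt t (hasDerivAt_pt k t b)

theorem measurePreserving_pt (k : Fin 2) :
    MeasurePreserving (fun p : ℝ × ℝ => pt k p.1 p.2) (volume.prod volume) volume := by
  rw [← Measure.volume_eq_prod]
  fin_cases k
  · exact MeasurePreserving.id volume
  · exact Measure.measurePreserving_swap

theorem measurableEmbedding_pt (k : Fin 2) :
    MeasurableEmbedding (fun p : ℝ × ℝ => pt k p.1 p.2) := by
  fin_cases k
  · exact MeasurableEmbedding.id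
  · exact MeasurableEquiv.prodComm.measurableEmbedding

variable {E : Type*} [NormedAddCommGroup E] {F : ℝ × ℝ → E}

theorem MeasureTheory.Integrable.comp_pt (k : Fin 2) (hF : Integrable F) :
    Integrable (fun p : ℝ × ℝ => F (pt k p.1 p.2)) (volume.prod volume) :=
  ((measurePreserving_pt k).integrable_comp_emb (measurableEmbedding_pt k)).mpr hF

theorem MeasureTheory.Integrable.ae_integrable_comp_pt (k : Fin 2) (hF : Integrable F) :
    ∀ᵐ b : ℝ, Integrable fun t => F (pt k t b) :=
  (hF.comp_pt k).prod_left_ae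

theorem integral_eq_integral_integral_pt [NormedSpace ℝ E] (k : Fin 2) (hF : Integrable F) :
    ∫ x, F x = ∫ b, ∫ t, F (pt k t b) := by
  rw [← (measurePreserving_pt k).integral_comp (measurableEmbedding_pt k),
    integral_prod_symm _ (hF.comp_pt k)]

end CoordinateLines

theorem integral_coord_mul_mul_pdR {ρ : ℝ × ℝ → ℝ} (hρ : Differentiable ℝ ρ) (k : Fin 2)
    (hsq : Integrable fun x => ρ x ^ 2)
    (hint : Integrable fun x => coord k x * ρ x * pdR k ρ x)
    (hdecay : ∀ᵐ b : ℝ, Tendsto (fun t => t * ρ (pt k t b) ^ 2) (cocompact ℝ) (𝓝 0)) :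
    ∫ x, coord k x * ρ x * pdR k ρ x = -(1 / 2) * ∫ x, ρ x ^ 2 := by
  rw [integral_eq_integral_integral_pt k hint, integral_eq_integral_integral_pt k hsq,
    ← integral_const_mul]
  refine integral_congr_ae ?_
  filter_upwards [hsq.ae_integrable_comp_pt k, hint.ae_integrable_comp_pt k, hdecay]
    with b hsq_b hint_b hdecay_b
  simp only [coord_pt] at hint_b ⊢
  exact integral_mul_mul_deriv_eq_neg_half_integral_sq (hasDerivAt_comp_pt hρ k · b)
    hsq_b hint_b hdecay_b

theorem one_div_four_le_integral_sq_coord_mul_integral_sq_pdR {ρ : ℝ × ℝ → ℝ}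
    (hρ : Differentiable ℝ ρ) (hnorm : ∫ x, ρ x ^ 2 = 1) (k : Fin 2)
    (hx : MemLp (fun x => coord k x * ρ x) 2 volume) (hd : MemLp (pdR k ρ) 2 volume)
    (hdecay : ∀ᵐ b : ℝ, Tendsto (fun t => t * ρ (pt k t b) ^ 2) (cocompact ℝ) (𝓝 0)) :
    1 / 4 ≤ (∫ x, (coord k x * ρ x) ^ 2) * ∫ x, pdR k ρ x ^ 2 := by
  have hsq : Integrable fun x => ρ x ^ 2 := .of_integral_ne_zero (by simp [hnorm])
  have hpair := integral_coord_mul_mul_pdR hρ k hsq (hx.integrable_mul hd) hdecay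
  calc (1 / 4 : ℝ) = (∫ x, coord k x * ρ x * pdR k ρ x) ^ 2 := by rw [hpair, hnorm]; norm_num
    _ ≤ _ := sq_integral_mul_le_integral_sq_mul_integral_sq hx hd

theorem one_div_four_mul_sq_add_le {a₀ a₁ b₀ b₁ : ℝ} (s₁ s₂ : ℝ) (ha₀ : 0 ≤ a₀) (ha₁ : 0 ≤ a₁)
    (hb₀ : 0 ≤ b₀) (hb₁ : 0 ≤ b₁) (h₀ : 1 / 4 ≤ a₀ * b₀) (h₁ : 1 / 4 ≤ a₁ * b₁) :
    1 / 4 * (s₁ + s₂) ^ 2 ≤ (a₀ + a₁) * (s₁ ^ 2 * b₀ + s₂ ^ 2 * b₁) := by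
  set cross := s₂ ^ 2 * (a₀ * b₁) + s₁ ^ 2 * (a₁ * b₀)
  have hcross_nonneg : 0 ≤ cross := by positivity
  -- AM–GM: `cross² ≥ 4 (s₂² a₀ b₁)(s₁² a₁ b₀) = 4 (s₁ s₂)² (a₀ b₀)(a₁ b₁) ≥ (s₁ s₂ / 2)²`
  have hcross_sq : (s₁ * s₂ / 2) ^ 2 ≤ cross ^ 2 := by
    have hprod : 1 / 16 ≤ (a₀ * b₀) * (a₁ * b₁) := by nlinarith
    nlinarith [sq_nonneg (s₂ ^ 2 * (a₀ * b₁) - s₁ ^ 2 * (a₁ * b₀)),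
      mul_le_mul_of_nonneg_left hprod (sq_nonneg (s₁ * s₂))]
  have hcross := le_of_sq_le_sq hcross_sq hcross_nonneg
  nlinarith [mul_le_mul_of_nonneg_left h₀ (sq_nonneg s₁),
    mul_le_mul_of_nonneg_left h₁ (sq_nonneg s₂)]

theorem stmt6_general (ρ : ℝ × ℝ → ℝ) (hdiff : Differentiable ℝ ρ)
    (hnorm : (∫ x : ℝ × ℝ, ρ x ^ 2) = 1)
    (hL2x : ∀ k : Fin 2, MemLp (fun x : ℝ × ℝ => coord k x * ρ x) 2 volume)
    (hL2d : ∀ k : Fin 2, MemLp (fun x : ℝ × ℝ => pdR k ρ x) 2 volume)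
    (hdecay : ∀ k : Fin 2, ∀ᵐ b : ℝ ∂(volume : Measure ℝ),
      Tendsto (fun t : ℝ => t * ρ (pt k t b) ^ 2) (cocompact ℝ) (nhds 0)) :
    ∀ α₁ α₂ : ℝ,
      (∫ x : ℝ × ℝ, (x.1 ^ 2 + x.2 ^ 2) * ρ x ^ 2) *
        (∫ x : ℝ × ℝ, (Real.sin α₁ ^ 2 * (pdR 0 ρ x) ^ 2 + Real.sin α₂ ^ 2 * (pdR 1 ρ x) ^ 2))
      ≥ (1 / 4) * (Real.sin α₁ + Real.sin α₂) ^ 2 := by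
  intro α₁ α₂
  have huncertainty k := one_div_four_le_integral_sq_coord_mul_integral_sq_pdR hdiff hnorm k
    (hL2x k) (hL2d k) (hdecay k)
  have hmoment : ∫ x : ℝ × ℝ, (x.1 ^ 2 + x.2 ^ 2) * ρ x ^ 2
      = (∫ x, (coord 0 x * ρ x) ^ 2) + ∫ x, (coord 1 x * ρ x) ^ 2 := by
    rw [← integral_add (hL2x 0).integrable_sq (hL2x 1).integrable_sq]
    congr with x
    simp only [coord, Fin.isValue, if_true, Fin.one_eq_zero_iff, OfNat.ofNat_ne_one, if_false]
    ring
  have hgradient : ∫ x, (Real.sin α₁ ^ 2 * pdR 0 ρ x ^ 2 + Real.sin α₂ ^ 2 * pdR 1 ρ x ^ 2)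
      = Real.sin α₁ ^ 2 * (∫ x, pdR 0 ρ x ^ 2) + Real.sin α₂ ^ 2 * ∫ x, pdR 1 ρ x ^ 2 := by
    rw [integral_add ((hL2d 0).integrable_sq.const_mul _) ((hL2d 1).integrable_sq.const_mul _),
      integral_const_mul, integral_const_mul]
  rw [ge_iff_le, hmoment, hgradient]
  exact one_div_four_mul_sq_add_le _ _ (integral_nonneg fun _ => sq_nonneg _)
    (integral_nonneg fun _ => sq_nonneg _) (integral_nonneg fun _ => sq_nonneg _)
    (integral_nonneg fun _ => sq_nonneg _) (huncertainty 0) (huncertainty 1)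

/-- `(∫ (x₁²+x₂²) ρ²)(∫ (sin²α₁ (∂₁ρ)² + sin²α₂ (∂₂ρ)²)) ≥ (1/4)(sin α₁ + sin α₂)²`. -/
theorem stmt6 (ρ : ℝ × ℝ → ℝ) (hpos : ∀ x, 0 ≤ ρ x) (hdiff : Differentiable ℝ ρ)
    (hnorm : (∫ x : ℝ × ℝ, ρ x ^ 2) = 1)
    (hL2x : ∀ k : Fin 2, MemLp (fun x : ℝ × ℝ => coord k x * ρ x) 2 volume)
    (hL2d : ∀ k : Fin 2, MemLp (fun x : ℝ × ℝ => pdR k ρ x) 2 volume)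
    (hdecay : ∀ k : Fin 2, ∀ᵐ b : ℝ ∂(volume : Measure ℝ),
      Tendsto (fun t : ℝ => t * ρ (pt k t b) ^ 2) (cocompact ℝ) (nhds 0)) :
    ∀ α₁ α₂ : ℝ,
      (∫ x : ℝ × ℝ, (x.1 ^ 2 + x.2 ^ 2) * ρ x ^ 2) *
        (∫ x : ℝ × ℝ, (Real.sin α₁ ^ 2 * (pdR 0 ρ x) ^ 2 + Real.sin α₂ ^ 2 * (pdR 1 ρ x) ^ 2))
      ≥ (1 / 4) * (Real.sin α₁ + Real.sin α₂) ^ 2 :=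
  stmt6_general ρ hdiff hnorm hL2x hL2d hdecay
end
end

section
/- Let f : ℝ² → ℍ be a quaternion-valued Schwartz function (every real component of f is a Schwartz function on ℝ²) and α₁, α₂ ∉ πℤ. Then for every w ∈ ℝ²: F_{α₁,α₂}{∂f/∂x₂}(w) = −cot α₂ · F_{α₁,α₂}{x₂ f}(w) · j + w₂ csc α₂ · F_{α₁,α₂}{f}(w) · j, where the multiplications by j are on the right. -/
noncomputable section
open MeasureTheory Real Filter

/-!
Since `K_{α₁}` does not depend on `x₂`, integrate by parts in `x₂` against the right kernel.
As `K_{α₂}` takes values in the commutative subalgebra `ℝ + ℝj ≅ ℂ`, it is the image of a complex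
chirp and differentiates like one: `∂K_{α₂}/∂x₂ = (x₂ cot α₂ - w₂ csc α₂) K_{α₂} j`.
Both kernels have constant modulus `|C_α|`, so all the integrands involved are integrable
because `F`, `∂F/∂x₂` and `x₂ F` are.
-/

@[simp] lemma re_qj : qj.re = 0 := rfl
@[simp] lemma imI_qj : qj.imI = 0 := rfl
@[simp] lemma imJ_qj : qj.imJ = 1 := rfl
@[simp] lemma imK_qj : qj.imK = 0 := rfl

lemma qj_mul_qj : qj * qj = -1 := by
  ext <;> simp [Quaternion.re_one, Quaternion.imI_one, Quaternion.imJ_one, Quaternion.imK_one]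

def toQjAlgHom : ℂ →ₐ[ℝ] H := Complex.lift ⟨qj, qj_mul_qj⟩

lemma toQjAlgHom_apply (z : ℂ) : toQjAlgHom z = toQj z := by
  rw [toQjAlgHom, Complex.lift_apply, Complex.liftAux_apply]
  ext <;> simp [toQj]

lemma toQjAlgHom_I : toQjAlgHom Complex.I = qj := Complex.liftAux_apply_I qj qj_mul_qj

lemma norm_toQi (z : ℂ) : ‖toQi z‖ = ‖z‖ := by
  rw [← sq_eq_sq₀ (norm_nonneg _) (norm_nonneg _), sq, sq, ← Quaternion.normSq_eq_norm_mul_self,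
    Complex.norm_mul_self_eq_normSq, Complex.normSq_apply, Quaternion.normSq_def']
  simp [toQi]; ring

lemma norm_toQj (z : ℂ) : ‖toQj z‖ = ‖z‖ := by
  rw [← sq_eq_sq₀ (norm_nonneg _) (norm_nonneg _), sq, sq, ← Quaternion.normSq_eq_norm_mul_self,
    Complex.norm_mul_self_eq_normSq, Complex.normSq_apply, Quaternion.normSq_def']
  simp [toQj]; ring

section Kernels

variable (α x w : ℝ)

def chirp : ℂ :=
  Cc α * Complex.exp (Complex.I * (((x ^ 2 + w ^ 2) / 2) * Real.cot α - x * w / Real.sin α))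

lemma chirp_eq : chirp α x w =
    Cc α * Complex.exp (((x ^ 2 + w ^ 2) / 2 * cot α - x * w / sin α : ℝ) * Complex.I) := by
  rw [chirp]; push_cast; ring_nf

lemma norm_chirp : ‖chirp α x w‖ = ‖Cc α‖ := by
  rw [chirp_eq, norm_mul, Complex.norm_exp_ofReal_mul_I, mul_one]

lemma hasDerivAt_chirp :
    HasDerivAt (chirp α · w) (chirp α x w * ((x * cot α - w / sin α : ℝ) * Complex.I)) x := by
  have hphase : HasDerivAt (fun x : ℝ => (x ^ 2 + w ^ 2) / 2 * cot α - x * w / sin α)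
      (x * cot α - w / sin α) x := by
    refine (((((hasDerivAt_pow 2 x).add_const (w ^ 2)).div_const 2).mul_const (cot α)).sub
      (((hasDerivAt_id x).mul_const w).div_const (sin α))).congr_deriv ?_
    simp
  simp only [chirp_eq]
  exact ((hphase.ofReal_comp.mul_const Complex.I).cexp.const_mul (Cc α)).congr_deriv (by ring)

lemma continuous_chirp : Continuous (chirp α · w) := by
  unfold chirp; fun_prop

lemma K1_eq_ofComplex_chirp : K1 α x w = Quaternion.ofComplex (chirp α x w) := rfl

lemma K2_eq_toQjAlgHom_chirp : K2 α x w = toQjAlgHom (chirp α x w) :=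
  (toQjAlgHom_apply _).symm

lemma norm_K1 : ‖K1 α x w‖ = ‖Cc α‖ := by
  rw [K1, norm_toQi, ← chirp, norm_chirp]

lemma norm_K2 : ‖K2 α x w‖ = ‖Cc α‖ := by
  rw [K2, norm_toQj, ← chirp, norm_chirp]

lemma continuous_K1 : Continuous (K1 α · w) := by
  simp only [K1_eq_ofComplex_chirp]
  exact Quaternion.ofComplex.toLinearMap.continuous_of_finiteDimensional.comp (continuous_chirp α w)

lemma continuous_K2 : Continuous (K2 α · w) := by
  simp only [K2_eq_toQjAlgHom_chirp]
  exact toQjAlgHom.toLinearMap.continuous_of_finiteDimensional.comp (continuous_chirp α w)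

lemma hasDerivAt_K2 : HasDerivAt (K2 α · w) ((x * cot α - w / sin α) • (K2 α x w * qj)) x := by
  simp only [K2_eq_toQjAlgHom_chirp]
  refine (toQjAlgHom.toLinearMap.toContinuousLinearMap.hasFDerivAt.comp_hasDerivAt x
    (hasDerivAt_chirp α x w)).congr_deriv ?_
  rw [LinearMap.coe_toContinuousLinearMap', AlgHom.toLinearMap_apply, map_mul, map_mul,
    toQjAlgHom_I, ← Complex.coe_algebraMap, AlgHom.commutes, ← Algebra.smul_def, mul_smul_comm]

end Kernels

lemma integrable_K1_mul_mul_K2 (α₁ α₂ w₁ w₂ : ℝ) {G : ℝ × ℝ → H} (hG : Integrable G) :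
    Integrable (fun x => K1 α₁ x.1 w₁ * G x * K2 α₂ x.2 w₂) :=
  (hG.bdd_mul ((continuous_K1 α₁ w₁).comp continuous_fst).aestronglyMeasurable
    (ae_of_all _ fun x => (norm_K1 α₁ x.1 w₁).le)).mul_bdd
    ((continuous_K2 α₂ w₂).comp continuous_snd).aestronglyMeasurable
    (ae_of_all _ fun x => (norm_K2 α₂ x.2 w₂).le)

lemma hasLineDerivAt_fst_mul {A : Type*} [NormedRing A] [NormedAlgebra ℝ A] (u : ℝ → A)
    {f : ℝ × ℝ → A} {f' : A} {x : ℝ × ℝ} (hf : HasLineDerivAt ℝ f f' x (0, 1)) :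
    HasLineDerivAt ℝ (fun y => u y.1 * f y) (u x.1 * f') x (0, 1) := by
  unfold HasLineDerivAt at hf ⊢
  simpa using hf.const_mul (u x.1)

lemma hasLineDerivAt_comp_snd {E : Type*} [NormedAddCommGroup E] [NormedSpace ℝ E]
    {g : ℝ → E} {g' : E} {x : ℝ × ℝ} (hg : HasDerivAt g g' x.2) :
    HasLineDerivAt ℝ (fun y => g y.2) g' x (0, 1) := by
  unfold HasLineDerivAt
  simpa using HasDerivAt.comp_const_add x.2 0 (by simpa using hg)

lemma DifferentiableAt.hasLineDerivAt_pd_one {g : ℝ × ℝ → H} {x : ℝ × ℝ}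
    (hg : DifferentiableAt ℝ g x) : HasLineDerivAt ℝ g (pd 1 g x) x (0, 1) :=
  hg.hasFDerivAt.hasLineDerivAt (0, 1)

lemma SchwartzMap.integrable_snd_smul {V : Type*} [NormedAddCommGroup V] [NormedSpace ℝ V]
    (F : SchwartzMap (ℝ × ℝ) V) : Integrable (fun x : ℝ × ℝ => x.2 • F x) :=
  ((SchwartzMap.smulLeftCLM V (fun x : ℝ × ℝ => x.2) F).integrable (μ := volume)).congr
    (ae_of_all _ fun x => SchwartzMap.smulLeftCLM_apply_apply
      (ContinuousLinearMap.snd ℝ ℝ ℝ).hasTemperateGrowth F x)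

lemma integral_K1_mul_pd_one_mul_K2 (α₁ α₂ w₁ w₂ : ℝ) {G : ℝ × ℝ → H} (hG : Differentiable ℝ G)
    (hG_int : Integrable G) (hG'_int : Integrable (pd 1 G))
    (hGK2'_int : Integrable fun x =>
      K1 α₁ x.1 w₁ * G x * ((x.2 * cot α₂ - w₂ / sin α₂) • (K2 α₂ x.2 w₂ * qj))) :
    ∫ x, K1 α₁ x.1 w₁ * pd 1 G x * K2 α₂ x.2 w₂
      = -∫ x, K1 α₁ x.1 w₁ * G x * ((x.2 * cot α₂ - w₂ / sin α₂) • (K2 α₂ x.2 w₂ * qj)) :=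
  neg_eq_iff_eq_neg.mp (integral_bilinear_hasLineDerivAt_right_eq_neg_left_of_integrable
    (B := ContinuousLinearMap.mul ℝ H) (v := ((0, 1) : ℝ × ℝ))
    (f := fun x => K1 α₁ x.1 w₁ * G x) (f' := fun x => K1 α₁ x.1 w₁ * pd 1 G x)
    (g := fun x => K2 α₂ x.2 w₂)
    (g' := fun x => (x.2 * cot α₂ - w₂ / sin α₂) • (K2 α₂ x.2 w₂ * qj))
    (integrable_K1_mul_mul_K2 α₁ α₂ w₁ w₂ hG'_int) hGK2'_int
    (integrable_K1_mul_mul_K2 α₁ α₂ w₁ w₂ hG_int)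
    (fun x _ => hasLineDerivAt_fst_mul (K1 α₁ · w₁) (hG x).hasLineDerivAt_pd_one)
    (fun _ _ => hasLineDerivAt_comp_snd (hasDerivAt_K2 _ _ _))).symm

theorem stmt10_general (F : SchwartzMap (ℝ × ℝ) H)
    (α₁ α₂ : ℝ) (w : ℝ × ℝ) :
    QFrFT α₁ α₂ (fun x => pd 1 (⇑F) x) w
      = (-Real.cot α₂) • (QFrFT α₁ α₂ (fun x => x.2 • F x) w * qj)
        + (w.2 / Real.sin α₂) • (QFrFT α₁ α₂ (⇑F) w * qj) := by
  have hF := integrable_K1_mul_mul_K2 α₁ α₂ w.1 w.2 F.integrable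
  have hx₂F := integrable_K1_mul_mul_K2 α₁ α₂ w.1 w.2 F.integrable_snd_smul
  have hA := (hx₂F.mul_const qj).fun_smul (cot α₂)
  have hB := (hF.mul_const qj).fun_smul (w.2 / sin α₂)
  have hdistrib (x : ℝ × ℝ) :
      K1 α₁ x.1 w.1 * F x * ((x.2 * cot α₂ - w.2 / sin α₂) • (K2 α₂ x.2 w.2 * qj))
        = cot α₂ • (K1 α₁ x.1 w.1 * (x.2 • F x) * K2 α₂ x.2 w.2 * qj)
          - (w.2 / sin α₂) • (K1 α₁ x.1 w.1 * F x * K2 α₂ x.2 w.2 * qj) := by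
    simp only [mul_smul_comm, smul_mul_assoc, smul_smul, sub_smul, mul_assoc, mul_sub,
      mul_comm (cot α₂)]
  have hibp := integral_K1_mul_pd_one_mul_K2 α₁ α₂ w.1 w.2 F.differentiable F.integrable
    (LineDeriv.lineDerivOp (dir 1) F).integrable
    ((hA.sub hB).congr (ae_of_all _ fun x => (hdistrib x).symm))
  simp only [hdistrib] at hibp
  rw [QFrFT, hibp, integral_sub hA hB, integral_smul, integral_smul,
    integral_mul_const_of_integrable hx₂F, integral_mul_const_of_integrable hF, QFrFT, QFrFT,
    neg_sub, neg_smul]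
  abel

/-- derivative formula for the QFrFT in the second variable
(with right multiplication by `j`). -/
theorem stmt10 (F : SchwartzMap (ℝ × ℝ) H)
    (α₁ α₂ : ℝ) (hα₁ : NotPiMultiple α₁) (hα₂ : NotPiMultiple α₂) (w : ℝ × ℝ) :
    QFrFT α₁ α₂ (fun x => pd 1 (⇑F) x) w
      = (-Real.cot α₂) • (QFrFT α₁ α₂ (fun x => x.2 • F x) w * qj)
        + (w.2 / Real.sin α₂) • (QFrFT α₁ α₂ (⇑F) w * qj) :=
  stmt10_general F α₁ α₂ w
end
end

section
/- Let q : ℝ² → ℍ be twice continuously differentiable with |q(x)| = 1 for all x (in particular q(x) is invertible), and suppose there exist pure quaternions β₁, β₂ (quaternions with zero scalar part) such that ∂q/∂x_k (x) = β_k x_k q(x) for all x ∈ ℝ² and k = 1,2. Then β₁ and β₂ commute: β₁β₂ = β₂β₁. -/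
noncomputable section
open MeasureTheory Real Filter

/-! Differentiating `∂₁q = x₁ β₁ q` in `x₂` and `∂₂q = x₂ β₂ q` in `x₁` gives
`∂₂∂₁q = x₁x₂ β₁β₂ q` and `∂₁∂₂q = x₁x₂ β₂β₁ q`. Since `q` is `C²` the mixed partials agree, and
at `x = (1, 1)` we cancel the nonzero quaternion `q x`. -/

section

variable {E F 𝔸 : Type*} [NormedAddCommGroup E] [NormedSpace ℝ E]
  [NormedAddCommGroup F] [NormedSpace ℝ F] [NormedRing 𝔸] [NormedAlgebra ℝ 𝔸]

theorem fderiv_fderiv_apply_comm {g : E → F} {x : E} (hg : ContDiffAt ℝ 2 g x) (v w : E) :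
    fderiv ℝ (fun y => fderiv ℝ g y v) x w = fderiv ℝ (fun y => fderiv ℝ g y w) x v := by
  have hdiff : DifferentiableAt ℝ (fderiv ℝ g) x :=
    (hg.fderiv_right (m := 1) le_rfl).differentiableAt one_ne_zero
  rw [fderiv_clm_apply hdiff (differentiableAt_const v),
    fderiv_clm_apply hdiff (differentiableAt_const w)]
  simpa using (hg.isSymmSndFDerivAt (by simp)).eq w v

theorem fderiv_smul_const_mul_apply {c : E → ℝ} {g : E → 𝔸} {x v : E}
    (hc : DifferentiableAt ℝ c x) (hg : DifferentiableAt ℝ g x) (hcv : fderiv ℝ c x v = 0)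
    (β : 𝔸) :
    fderiv ℝ (fun y => c y • (β * g y)) x v = c x • (β * fderiv ℝ g x v) := by
  rw [fderiv_fun_smul hc (hg.const_mul β), fderiv_const_mul hg]
  simp [hcv]

end

theorem pd_pd_comm {g : ℝ × ℝ → H} {x : ℝ × ℝ} (hg : ContDiffAt ℝ 2 g x) (k l : Fin 2) :
    pd l (pd k g) x = pd k (pd l g) x :=
  fderiv_fderiv_apply_comm hg (dir k) (dir l)

theorem pd_one_pd_zero {q : ℝ × ℝ → H} {β₁ β₂ : H} {x : ℝ × ℝ} (hq : DifferentiableAt ℝ q x)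
    (h1 : ∀ x : ℝ × ℝ, pd 0 q x = x.1 • (β₁ * q x)) (h2 : pd 1 q x = x.2 • (β₂ * q x)) :
    pd 1 (pd 0 q) x = (x.1 * x.2) • (β₁ * β₂ * q x) := by
  rw [pd, funext h1,
    fderiv_smul_const_mul_apply differentiableAt_fst hq (by simp [fderiv_fst, dir]), ← pd, h2]
  simp [mul_smul, mul_assoc]

theorem pd_zero_pd_one {q : ℝ × ℝ → H} {β₁ β₂ : H} {x : ℝ × ℝ} (hq : DifferentiableAt ℝ q x)
    (h1 : pd 0 q x = x.1 • (β₁ * q x)) (h2 : ∀ x : ℝ × ℝ, pd 1 q x = x.2 • (β₂ * q x)) :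
    pd 0 (pd 1 q) x = (x.1 * x.2) • (β₂ * β₁ * q x) := by
  rw [pd, funext h2,
    fderiv_smul_const_mul_apply differentiableAt_snd hq (by simp [fderiv_snd, dir]), ← pd, h1]
  simp [mul_smul, mul_assoc, smul_comm x.1 x.2]

theorem stmt17_general (q : ℝ × ℝ → H) (hq2 : ContDiff ℝ 2 q) (hqn : ∀ x, ‖q x‖ = 1)
    (β₁ β₂ : H)
    (h1 : ∀ x : ℝ × ℝ, pd 0 q x = x.1 • (β₁ * q x))
    (h2 : ∀ x : ℝ × ℝ, pd 1 q x = x.2 • (β₂ * q x)) :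
    β₁ * β₂ = β₂ * β₁ := by
  have hq : DifferentiableAt ℝ q (1, 1) := hq2.differentiable (by norm_num) _
  have hq_ne : q (1, 1) ≠ 0 := norm_ne_zero_iff.mp (by simp [hqn])
  have hmixed := pd_pd_comm hq2.contDiffAt 0 1 (x := (1, 1))
  rw [pd_one_pd_zero hq h1 (h2 _), pd_zero_pd_one hq (h1 _) h2, one_mul, one_smul,
    one_smul] at hmixed
  exact mul_right_cancel₀ hq_ne hmixed

/-- if `∂q/∂x_k = β_k x_k q` with `β_k` pure quaternions and `|q| = 1`,
then `β₁β₂ = β₂β₁`. -/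
theorem stmt17 (q : ℝ × ℝ → H) (hq2 : ContDiff ℝ 2 q) (hqn : ∀ x, ‖q x‖ = 1)
    (β₁ β₂ : H) (hβ₁ : Sc β₁ = 0) (hβ₂ : Sc β₂ = 0)
    (h1 : ∀ x : ℝ × ℝ, pd 0 q x = x.1 • (β₁ * q x))
    (h2 : ∀ x : ℝ × ℝ, pd 1 q x = x.2 • (β₂ * q x)) :
    β₁ * β₂ = β₂ * β₁ :=
  stmt17_general q hq2 hqn β₁ β₂ h1 h2
end
end
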